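/- Let Π = (P, 𝓛) be a finite projective plane of order n and let A be its incidence matrix over ℝ, with rows indexed by lines and columns by points, where A_{L,x} = 1 if x ∈ L and A_{L,x} = 0 otherwise. Then det(A·Aᵀ) = (n+1)² · n^{n²+n}. -/

import Mathlib

open Configuration Matrix

/-- The sum of `v` over the points of the line `l`. -/
noncomputable def lineSum {P L G : Type*} [Membership P L] [AddCommMonoid G]
    (v : P → G) (l : L) : G :=
  ∑ᶠ x ∈ {x : P | x ∈ l}, v x

/-- `v : P → G` is line invariant if its sum along every line of `L` is the same. -/
def LineInvariant (P L : Type*) {G : Type*} [Membership P L] [AddCommMonoid G]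
    (v : P → G) : Prop :=
  ∀ l l' : L, lineSum v l = lineSum v l'

open scoped Classical in
/-- The incidence matrix of a plane, with rows indexed by lines and columns by points:
the entry at `(l, x)` is `1` if `x ∈ l` and `0` otherwise. -/
noncomputable def incidenceMatrix (P L : Type*) [Membership P L] : Matrix L P ℝ :=
  Matrix.of fun l x => if x ∈ l then 1 else 0

/-!
Any two distinct lines of a projective plane of order `n` meet in exactly one point and every
line has `n + 1` points, so `A * Aᵀ = n • 1 + J` with `J` the all-ones matrix. Since `J` has
rank one, the matrix determinant lemma gives `det (n • 1 + J) = n ^ (N - 1) * (n + N)` for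
`N = n² + n + 1` lines, and `n + N = (n + 1)²`.
-/

theorem Matrix.det_smul_one_add_const {ι K : Type*} [Fintype ι] [DecidableEq ι] [Nonempty ι]
    [Field K] {a : K} (ha : a ≠ 0) (b : K) :
    (a • (1 : Matrix ι ι K) + of fun _ _ => b).det =
      a ^ (Fintype.card ι - 1) * (a + Fintype.card ι * b) := by
  have hrank_one : a • (1 : Matrix ι ι K) + of (fun _ _ => b) =
      a • (1 + replicateCol Unit (fun _ : ι => b / a) *
        replicateRow Unit (fun _ : ι => (1 : K))) := by
    ext i j
    simp [mul_apply, mul_add, mul_div_cancel₀ _ ha]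
  have hcard : a ^ Fintype.card ι = a ^ (Fintype.card ι - 1) * a := by
    rw [← pow_succ, Nat.sub_add_cancel Fintype.card_pos]
  rw [hrank_one, det_smul, det_one_add_replicateCol_mul_replicateRow, hcard]
  simp only [dotProduct, one_mul, Finset.sum_const, Finset.card_univ, nsmul_eq_mul]
  field_simp

theorem incidenceMatrix_mul_transpose_apply {P L : Type*} [Membership P L] [Fintype P]
    (l l' : L) : (incidenceMatrix P L * (incidenceMatrix P L)ᵀ) l l' =
      Nat.card {x : P // x ∈ l ∧ x ∈ l'} := by
  classical
  simp [incidenceMatrix, mul_apply, ← ite_and, Finset.sum_boole, Fintype.card_subtype, and_comm]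

theorem Configuration.HasPoints.card_mem_mem_of_ne {P L : Type*} [Membership P L] [HasPoints P L]
    {l l' : L} (h : l ≠ l') : Nat.card {x : P // x ∈ l ∧ x ∈ l'} = 1 := by
  obtain ⟨p, hp, huniq⟩ := HasPoints.existsUnique_point P L l l' h
  exact Nat.card_eq_one_iff_exists.2 ⟨⟨p, hp⟩, fun x => Subtype.ext (huniq x x.2)⟩

theorem Configuration.ProjectivePlane.incidenceMatrix_mul_transpose {P L : Type*} [Membership P L]
    [Fintype P] [Finite L] [DecidableEq L] [ProjectivePlane P L] :
    incidenceMatrix P L * (incidenceMatrix P L)ᵀ =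
      (order P L : ℝ) • (1 : Matrix L L ℝ) + of fun _ _ => 1 := by
  ext l l'
  rw [incidenceMatrix_mul_transpose_apply]
  rcases eq_or_ne l l' with rfl | h
  · simp only [and_self, Matrix.add_apply, Matrix.smul_apply, one_apply_eq, of_apply]
    rw [← pointCount, pointCount_eq]
    push_cast
    ring
  · simp [HasPoints.card_mem_mem_of_ne h, one_apply_ne h]

theorem stmt_15 {P L : Type*} [Membership P L] [Fintype P] [Fintype L] [DecidableEq L]
    [ProjectivePlane P L] {n : ℕ} (hn : ProjectivePlane.order P L = n) :
    (incidenceMatrix P L * (incidenceMatrix P L)ᵀ).det =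
      ((n : ℝ) + 1) ^ 2 * (n : ℝ) ^ (n ^ 2 + n) := by
  have hn0 : (n : ℝ) ≠ 0 := Nat.cast_ne_zero.2 (hn ▸ ProjectivePlane.one_lt_order P L).ne_bot
  have : Nonempty L := Fintype.card_pos_iff.1 (by rw [ProjectivePlane.card_lines P L]; omega)
  rw [ProjectivePlane.incidenceMatrix_mul_transpose, hn, det_smul_one_add_const hn0,
    ProjectivePlane.card_lines P L, hn, Nat.add_sub_cancel]
  push_cast
  ring
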